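/- Let h_1,…,h_K ∈ ℂ^N, set H_l = h_l h_l^H, and let Ω(H) = {(tr(Q H_1), …, tr(Q H_K)) : Q Hermitian positive semidefinite, tr(Q) ≤ 1}. Fix an index k and η ∈ ℝ^K with η_k > 0 and η_l < 0 for all l ≠ k. Then every point y of the exposed face Φ_{Ω(H)}(η) = {y ∈ Ω(H) : ηᵀy = max_{z∈Ω(H)} ηᵀz} is achieved by a correlation matrix of rank at most one; that is, there exists w ∈ ℂ^N with ‖w‖ ≤ 1 such that y = (|h_1^H w|², …, |h_K^H w|²). -/

import Mathlib

/-!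
Write `Q = Bᴴ B`, so that `y_l = ‖B h_l‖²` and `tr Q = ‖B‖_F² ≥ ‖B‖²`. With `u = B h_k`, the
vector `w = Bᴴ u / ‖u‖` has `‖w‖ ≤ ‖B‖ ≤ 1` and `h_lᴴ w = ⟪B h_l, u⟫ / ‖u‖`, so by Cauchy–Schwarz
`|h_lᴴ w|² ≤ y_l`, with equality for `l = k`. The rank-one point `z = (|h_lᴴ w|²)_l` of `Ω(H)`
therefore satisfies `ηᵀz ≥ ηᵀy`, strictly unless `z = y` because `η_l < 0` for `l ≠ k`; since
`y` maximises `ηᵀ·` over `Ω(H)`, `z = y`.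
-/

open Matrix
open scoped ComplexOrder

/-- The power gain `hᴴ Q h` (a real number for Hermitian `Q`);
for `H = h hᴴ` this equals `tr(Q H)`. -/
noncomputable def powerGain {N : ℕ} (Q : Matrix (Fin N) (Fin N) ℂ) (h : Fin N → ℂ) : ℝ :=
  (star h ⬝ᵥ Q.mulVec h).re

/-- `Ω(H) = {(tr(Q H_1),…,tr(Q H_K)) : Q PSD, tr Q ≤ 1}` for `H_l = h_l h_lᴴ`. -/
def PGRegion {N K : ℕ} (h : Fin K → (Fin N → ℂ)) : Set (Fin K → ℝ) :=
  {x | ∃ Q : Matrix (Fin N) (Fin N) ℂ, Q.PosSemidef ∧ Q.trace.re ≤ 1 ∧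
    x = fun l => powerGain Q (h l)}

open WithLp
open scoped InnerProductSpace

namespace ContinuousLinearMap

variable {𝕜 E F : Type*} [RCLike 𝕜] [NormedAddCommGroup E] [InnerProductSpace 𝕜 E]
  [CompleteSpace E] [NormedAddCommGroup F] [InnerProductSpace 𝕜 F] [CompleteSpace F]

theorem exists_norm_le_one_norm_inner_le_norm_apply (T : E →L[𝕜] F) (hT : ‖T‖ ≤ 1) (x₀ : E) :
    ∃ w : E, ‖w‖ ≤ 1 ∧ ‖⟪x₀, w⟫_𝕜‖ = ‖T x₀‖ ∧ ∀ x, ‖⟪x, w⟫_𝕜‖ ≤ ‖T x‖ := by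
  by_cases h0 : T x₀ = 0
  · exact ⟨0, by simp, by simp [h0], fun x => by simp⟩
  set c := ‖T x₀‖
  have hc : 0 < c := norm_pos_iff.mpr h0
  have hinner : ∀ x, ‖⟪x, (c : 𝕜)⁻¹ • adjoint T (T x₀)⟫_𝕜‖ = ‖⟪T x, T x₀⟫_𝕜‖ / c := fun x => by
    rw [inner_smul_right, adjoint_inner_right, norm_mul, norm_inv, RCLike.norm_ofReal,
      abs_of_pos hc, inv_mul_eq_div]
  refine ⟨(c : 𝕜)⁻¹ • adjoint T (T x₀), ?_, ?_, fun x => ?_⟩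
  · calc ‖(c : 𝕜)⁻¹ • adjoint T (T x₀)‖ = ‖adjoint T (T x₀)‖ / c := by
          rw [norm_smul, norm_inv, RCLike.norm_ofReal, abs_of_pos hc, inv_mul_eq_div]
      _ ≤ ‖adjoint T‖ * c / c := by gcongr; exact le_opNorm _ _
      _ = ‖T‖ := by rw [LinearIsometryEquiv.norm_map, mul_div_cancel_right₀ _ hc.ne']
      _ ≤ 1 := hT
  · rw [hinner, inner_self_eq_norm_sq_to_K, norm_pow, RCLike.norm_ofReal, abs_norm, sq,
      mul_div_cancel_right₀ _ hc.ne']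
  · rw [hinner, div_le_iff₀ hc]
    exact norm_inner_le_norm _ _

end ContinuousLinearMap

namespace Matrix

variable {𝕜 n : Type*} [RCLike 𝕜] [Fintype n]

theorem re_trace_conjTranspose_mul_self (B : Matrix n n 𝕜) :
    RCLike.re (Bᴴ * B).trace = ∑ i, ∑ j, ‖B i j‖ ^ 2 := by
  simp only [trace, diag, mul_apply, conjTranspose_apply, RCLike.star_def, RCLike.conj_mul,
    map_sum, ← RCLike.ofReal_pow, RCLike.ofReal_re]
  exact Finset.sum_comm

theorem mulVec_apply_eq_inner (B : Matrix n n 𝕜) (x : n → 𝕜) (i : n) :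
    (B *ᵥ x) i = ⟪toLp 2 (star (B i)), toLp 2 x⟫_𝕜 := by
  rw [EuclideanSpace.inner_toLp_toLp, star_star, dotProduct_comm]
  rfl

theorem norm_toEuclideanCLM_sq_le_re_trace [DecidableEq n] (B : Matrix n n 𝕜) :
    ‖toEuclideanCLM (n := n) (𝕜 := 𝕜) B‖ ^ 2 ≤ RCLike.re (Bᴴ * B).trace := by
  have htr : 0 ≤ RCLike.re (Bᴴ * B).trace := by
    rw [re_trace_conjTranspose_mul_self]; positivity
  rw [← Real.le_sqrt (norm_nonneg _) htr]
  refine ContinuousLinearMap.opNorm_le_bound _ (Real.sqrt_nonneg _) fun x => ?_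
  rw [← pow_le_pow_iff_left₀ (norm_nonneg _) (by positivity) two_ne_zero, mul_pow,
    Real.sq_sqrt htr, re_trace_conjTranspose_mul_self, EuclideanSpace.norm_sq_eq, Finset.sum_mul]
  gcongr with i
  have hrow : ‖toLp 2 (star (B i))‖ ^ 2 = ∑ j, ‖B i j‖ ^ 2 := by
    simp [EuclideanSpace.norm_sq_eq]
  rw [ofLp_toEuclideanCLM, mulVec_apply_eq_inner, toLp_ofLp, ← hrow, ← mul_pow]
  gcongr
  exact norm_inner_le_norm _ _

end Matrix

theorem sum_normSq_eq_norm_toLp_sq {n : Type*} [Fintype n] (v : n → ℂ) :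
    ∑ i, Complex.normSq (v i) = ‖toLp 2 v‖ ^ 2 := by
  simp [EuclideanSpace.norm_sq_eq, Complex.sq_norm]

theorem normSq_star_dotProduct {n : Type*} [Fintype n] (a b : n → ℂ) :
    Complex.normSq (star a ⬝ᵥ b) = ‖⟪toLp 2 a, toLp 2 b⟫_ℂ‖ ^ 2 := by
  rw [EuclideanSpace.inner_toLp_toLp, dotProduct_comm, Complex.sq_norm]

theorem powerGain_conjTranspose_mul_self {N : ℕ} (B : Matrix (Fin N) (Fin N) ℂ) (v : Fin N → ℂ) :
    powerGain (Bᴴ * B) v = ‖toLp 2 (B *ᵥ v)‖ ^ 2 := by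
  rw [powerGain, ← mulVec_mulVec, dotProduct_mulVec, ← star_mulVec,
    ← inner_self_eq_norm_sq (𝕜 := ℂ), EuclideanSpace.inner_toLp_toLp, dotProduct_comm]
  rfl

theorem rankOne_mem_PGRegion {N K : ℕ} (h : Fin K → (Fin N → ℂ)) (w : Fin N → ℂ)
    (hw : ∑ i, Complex.normSq (w i) ≤ 1) :
    (fun l => Complex.normSq (star (h l) ⬝ᵥ w)) ∈ PGRegion h := by
  refine ⟨vecMulVec w (star w), posSemidef_vecMulVec_self_star w, ?_, ?_⟩
  · simpa [trace_vecMulVec, dotProduct, Complex.mul_conj] using hw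
  · funext l
    rw [powerGain, vecMulVec_mulVec, dotProduct_smul, star_dotProduct]
    simp [Complex.normSq_apply]

theorem exists_rankOne_le_of_mem_PGRegion {N K : ℕ} {h : Fin K → (Fin N → ℂ)} {y : Fin K → ℝ}
    (hy : y ∈ PGRegion h) (k : Fin K) :
    ∃ w : Fin N → ℂ, ∑ i, Complex.normSq (w i) ≤ 1 ∧
      Complex.normSq (star (h k) ⬝ᵥ w) = y k ∧ ∀ l, Complex.normSq (star (h l) ⬝ᵥ w) ≤ y l := by
  obtain ⟨Q, hQ, htr, rfl⟩ := hy
  dsimp only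
  obtain ⟨B, rfl⟩ : ∃ B, Q = Bᴴ * B := by
    open MatrixOrder in exact CStarAlgebra.nonneg_iff_eq_star_mul_self.mp hQ.nonneg
  set T := toEuclideanCLM (n := Fin N) (𝕜 := ℂ) B
  have hT : ‖T‖ ≤ 1 :=
    (pow_le_one_iff_of_nonneg (norm_nonneg _) two_ne_zero).mp
      ((norm_toEuclideanCLM_sq_le_re_trace B).trans htr)
  obtain ⟨w, hw, hwk, hwl⟩ := T.exists_norm_le_one_norm_inner_le_norm_apply hT (toLp 2 (h k))
  refine ⟨ofLp w, ?_, ?_, fun l => ?_⟩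
  · rw [sum_normSq_eq_norm_toLp_sq, toLp_ofLp]
    exact pow_le_one₀ (norm_nonneg _) hw
  · rw [normSq_star_dotProduct, toLp_ofLp, hwk, powerGain_conjTranspose_mul_self]; rfl
  · rw [normSq_star_dotProduct, toLp_ofLp, powerGain_conjTranspose_mul_self]
    exact pow_le_pow_left₀ (norm_nonneg _) (hwl _) 2

theorem eq_of_le_of_apply_eq_of_sum_mul_le {ι : Type*} [Fintype ι] {η y z : ι → ℝ} {k : ι}
    (hη : ∀ l, l ≠ k → η l < 0) (hk : z k = y k) (hle : ∀ l, z l ≤ y l)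
    (hsum : ∑ l, η l * z l ≤ ∑ l, η l * y l) : z = y := by
  have hterm : ∀ l ∈ Finset.univ, η l * y l ≤ η l * z l := fun l _ => by
    rcases eq_or_ne l k with rfl | hl
    · rw [hk]
    · exact mul_le_mul_of_nonpos_left (hle l) (hη l hl).le
  have heq := (Finset.sum_eq_sum_iff_of_le hterm).mp
    (le_antisymm (Finset.sum_le_sum hterm) hsum)
  funext l
  rcases eq_or_ne l k with rfl | hl
  · exact hk
  · exact (mul_left_cancel₀ (hη l hl).ne (heq l (Finset.mem_univ l))).symm

theorem exposed_face_rank_one_general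
    (N K : ℕ)
    (h : Fin K → (Fin N → ℂ)) (k : Fin K)
    (η : Fin K → ℝ) (hηl : ∀ l, l ≠ k → η l < 0)
    (y : Fin K → ℝ)
    (hy : y ∈ PGRegion h)
    (hface : ∀ z ∈ PGRegion h, ∑ l, η l * z l ≤ ∑ l, η l * y l) :
    ∃ w : Fin N → ℂ, (∑ i, Complex.normSq (w i)) ≤ 1 ∧
      y = fun l => Complex.normSq (star (h l) ⬝ᵥ w) := by
  obtain ⟨w, hw, hwk, hwle⟩ := exists_rankOne_le_of_mem_PGRegion hy k
  exact ⟨w, hw, (eq_of_le_of_apply_eq_of_sum_mul_le hηl hwk hwle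
    (hface _ (rankOne_mem_PGRegion h w hw))).symm⟩

/-- For `η` with `η_k > 0` and `η_l < 0` (`l ≠ k`), every point of the exposed
face of `Ω(H)` in direction `η` is achieved by a rank-at-most-one correlation
matrix `Q = w wᴴ` with `‖w‖ ≤ 1`. -/
theorem exposed_face_rank_one
    (N K : ℕ)
    (h : Fin K → (Fin N → ℂ)) (k : Fin K)
    (η : Fin K → ℝ) (hηk : 0 < η k) (hηl : ∀ l, l ≠ k → η l < 0)
    (y : Fin K → ℝ)
    (hy : y ∈ PGRegion h)
    (hface : ∀ z ∈ PGRegion h, ∑ l, η l * z l ≤ ∑ l, η l * y l) :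
    ∃ w : Fin N → ℂ, (∑ i, Complex.normSq (w i)) ≤ 1 ∧
      y = fun l => Complex.normSq (star (h l) ⬝ᵥ w) :=
  exposed_face_rank_one_general N K h k η hηl y hy hface
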